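/- arXiv:1509.01353 — 2 statements merged into one kernel-verified Lean document; each statement's English description precedes it below -/
import Mathlib

section
/- For all real numbers α > 2, c > 0 and ρ ≥ 1, the function r ↦ (1 − exp(−c r^{−α})) r is integrable on [ρ, ∞), and ∫_ρ^∞ (1 − exp(−c r^{−α})) r dr = (1/2) [ c^{2/α} γ(1 − 2/α, c ρ^{−α}) − ρ² (1 − exp(−c ρ^{−α})) ]. (This is the integral evaluation underlying the Laplace transform of the received power from far power beacons in Lemma 4, case 1 < ρ < ∞.) -/
open MeasureTheory Set Filter Real Topology

/-- The lower incomplete gamma function γ(s, x) = ∫_0^x t^(s-1) e^(-t) dt. -/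
noncomputable def lowerGamma (s x : ℝ) : ℝ := ∫ t in (0:ℝ)..x, t ^ (s - 1) * Real.exp (-t)

/-!
With `u = c r^(-α)` one has `d/dr γ(1 - 2/α, u) = u^(-2/α) e^(-u) u' = c^(-2/α) r² e^(-u) u'`,
which is exactly the term left over when `(1 - e^(-u)) r` is integrated by parts against `r²/2`.
Hence `F(r) = r²/2 (1 - e^(-u)) - c^(2/α)/2 γ(1 - 2/α, u)` is an antiderivative of the nonnegative
integrand. Since `α > 2`, both terms of `F` vanish as `r → ∞` (the first is `O(r^(2-α))`, the
second because `u → 0` and `γ(s, ·)` is continuous with `γ(s, 0) = 0`), so the integral over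
`[ρ, ∞)` is `-F(ρ)`.
-/

section LowerGamma

variable {s : ℝ}

lemma intervalIntegrable_lowerGamma_integrand (hs : 0 < s) (a b : ℝ) :
    IntervalIntegrable (fun t : ℝ => t ^ (s - 1) * exp (-t)) volume a b :=
  (intervalIntegral.intervalIntegrable_rpow' (by linarith)).mul_continuousOn
    (continuous_exp.comp continuous_neg).continuousOn

lemma continuous_lowerGamma (hs : 0 < s) : Continuous (lowerGamma s) :=
  intervalIntegral.continuous_primitive (intervalIntegrable_lowerGamma_integrand hs) 0

lemma lowerGamma_zero_right (s : ℝ) : lowerGamma s 0 = 0 :=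
  intervalIntegral.integral_same

lemma hasDerivAt_lowerGamma (hs : 0 < s) {x : ℝ} (hx : 0 < x) :
    HasDerivAt (lowerGamma s) (x ^ (s - 1) * exp (-x)) x := by
  have hcont : ∀ y ∈ Ioi (0 : ℝ), ContinuousAt (fun t : ℝ => t ^ (s - 1) * exp (-t)) y :=
    fun y hy => (continuousAt_rpow_const y _ (Or.inl hy.ne')).mul
      (continuous_exp.comp continuous_neg).continuousAt
  exact intervalIntegral.integral_hasDerivAt_right
    (intervalIntegrable_lowerGamma_integrand hs 0 x)
    (ContinuousAt.stronglyMeasurableAtFilter isOpen_Ioi hcont x hx) (hcont x hx)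

end LowerGamma

section Antiderivative

variable {α c : ℝ}

noncomputable def oneSubExpAntideriv (α c r : ℝ) : ℝ :=
  r ^ 2 / 2 * (1 - exp (-c * r ^ (-α))) -
    c ^ (2 / α) / 2 * lowerGamma (1 - 2 / α) (c * r ^ (-α))

lemma one_sub_two_div_pos (hα : 2 < α) : 0 < 1 - 2 / α := by
  rw [sub_pos, div_lt_one (by linarith)]
  exact hα

lemma one_sub_exp_neg_mul_rpow_nonneg (hc : 0 ≤ c) {r : ℝ} (hr : 0 ≤ r) :
    0 ≤ 1 - exp (-c * r ^ (-α)) :=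
  sub_nonneg.2 (exp_le_one_iff.2 (by rw [neg_mul, neg_nonpos]; positivity))

lemma rpow_two_div_mul_rpow_neg_two_div (hc : 0 < c) (hα : α ≠ 0) {r : ℝ} (hr : 0 < r) :
    c ^ (2 / α) * (c * r ^ (-α)) ^ (-(2 / α)) = r ^ 2 := by
  rw [mul_rpow hc.le (rpow_nonneg hr.le _), ← rpow_mul hr.le, ← mul_assoc, ← rpow_add hc,
    add_neg_cancel, rpow_zero, one_mul, neg_mul_neg, mul_div_cancel₀ _ hα, rpow_two]

lemma hasDerivAt_oneSubExpAntideriv (hα : 2 < α) (hc : 0 < c) {r : ℝ} (hr : 0 < r) :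
    HasDerivAt (oneSubExpAntideriv α c) ((1 - exp (-c * r ^ (-α))) * r) r := by
  have hpow : HasDerivAt (fun x : ℝ => x ^ (-α)) (-α * r ^ (-α - 1)) r :=
    hasDerivAt_rpow_const (Or.inl hr.ne')
  have hγ := (hasDerivAt_lowerGamma (one_sub_two_div_pos hα)
    (by positivity : 0 < c * r ^ (-α))).comp r (hpow.const_mul c)
  have hE := (hpow.const_mul (-c)).exp
  have key := rpow_two_div_mul_rpow_neg_two_div hc (zero_lt_two.trans hα).ne' hr
  have hF := (((hasDerivAt_pow 2 r).div_const 2).mul ((hasDerivAt_const r 1).sub hE)).sub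
    (hγ.const_mul (c ^ (2 / α) / 2))
  refine hF.congr_deriv ?_
  simp only [Pi.sub_apply, sub_sub_cancel_left, neg_mul]
  linear_combination (exp (-(c * r ^ (-α))) * c * α * r ^ (-α - 1) / 2) * key

lemma tendsto_oneSubExpAntideriv_atTop (hα : 2 < α) (hc : 0 < c) :
    Tendsto (oneSubExpAntideriv α c) atTop (𝓝 0) := by
  have hfirst : Tendsto (fun r : ℝ => r ^ 2 / 2 * (1 - exp (-c * r ^ (-α)))) atTop (𝓝 0) := by
    have hbound : Tendsto (fun r : ℝ => c / 2 * r ^ (-(α - 2))) atTop (𝓝 0) := by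
      simpa using (tendsto_rpow_neg_atTop (by linarith : 0 < α - 2)).const_mul (c / 2)
    refine squeeze_zero' ?_ ?_ hbound
    · filter_upwards [eventually_ge_atTop 0] with r hr
      exact mul_nonneg (by positivity) (one_sub_exp_neg_mul_rpow_nonneg hc.le hr)
    · filter_upwards [eventually_gt_atTop 0] with r hr
      calc r ^ 2 / 2 * (1 - exp (-c * r ^ (-α))) ≤ r ^ 2 / 2 * (c * r ^ (-α)) := by
            gcongr
            rw [neg_mul]
            linarith [one_sub_le_exp_neg (c * r ^ (-α))]
        _ = c / 2 * r ^ (-(α - 2)) := by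
            rw [neg_sub, sub_eq_add_neg, rpow_add hr, rpow_two]
            ring
  have hu : Tendsto (fun r : ℝ => c * r ^ (-α)) atTop (𝓝 0) := by
    simpa using (tendsto_rpow_neg_atTop (by linarith : 0 < α)).const_mul c
  have hsecond : Tendsto (fun r => lowerGamma (1 - 2 / α) (c * r ^ (-α))) atTop (𝓝 0) := by
    have h := ((continuous_lowerGamma (one_sub_two_div_pos hα)).tendsto 0).comp hu
    rwa [lowerGamma_zero_right] at h
  have h := hfirst.sub (hsecond.const_mul (c ^ (2 / α) / 2))
  rwa [mul_zero, sub_zero] at h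

end Antiderivative

theorem stmt_1 (α c ρ : ℝ) (hα : 2 < α) (hc : 0 < c) (hρ : 1 ≤ ρ) :
    MeasureTheory.IntegrableOn (fun r : ℝ => (1 - Real.exp (-c * r ^ (-α))) * r)
      (Set.Ici ρ) ∧
    ∫ r in Set.Ici ρ, (1 - Real.exp (-c * r ^ (-α))) * r =
      (1/2) * (c ^ (2/α) * lowerGamma (1 - 2/α) (c * ρ ^ (-α)) -
        ρ ^ 2 * (1 - Real.exp (-c * ρ ^ (-α)))) := by
  have hρ0 : 0 < ρ := by linarith
  have hderiv : ∀ r ∈ Ici ρ,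
      HasDerivAt (oneSubExpAntideriv α c) ((1 - exp (-c * r ^ (-α))) * r) r :=
    fun r hr => hasDerivAt_oneSubExpAntideriv hα hc (hρ0.trans_le hr)
  have hnonneg : ∀ r ∈ Ioi ρ, 0 ≤ (1 - exp (-c * r ^ (-α))) * r := fun r hr =>
    have hr0 : 0 ≤ r := (hρ0.trans hr).le
    mul_nonneg (one_sub_exp_neg_mul_rpow_nonneg hc.le hr0) hr0
  have hlim := tendsto_oneSubExpAntideriv_atTop hα hc
  constructor
  · rw [integrableOn_Ici_iff_integrableOn_Ioi]
    exact integrableOn_Ioi_deriv_of_nonneg' hderiv hnonneg hlim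
  · rw [integral_Ici_eq_integral_Ioi,
      integral_Ioi_of_hasDerivAt_of_nonneg' hderiv hnonneg hlim, oneSubExpAntideriv]
    ring
end

section
/- Fix real numbers P_p > 0, λ_p > 0, σ > 0, λ_s > 0, α > 2 and an integer N ≥ 2. With p(ρ) = exp(−λ_s π ρ²/N), q(ρ) = 1 − p(ρ), and S(ρ) = Σ_{M=1}^{N} (N/M)² C(N−1, M−1) p(ρ)^{N−M} q(ρ)^{M}, the function ρ ↦ λ_p P_p² σ² π [ ρ^{2−2α} p(ρ)^N/(α−1) + ((α − ρ^{2−2α})/((α−1) q(ρ)) + ρ^{2−2α}/(α−1)) S(ρ) ] tends to λ_p P_p² σ² π α/(α−1) as ρ → ∞. (Part of Corollary 3: the AD-WPT received-power variance converges to the omnidirectional value as the charging radius grows.) -/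
/-! As ρ → ∞ both `p = exp (-λ_s π ρ² / N)` and `ρ^(2 - 2α)`
tend to `0`. The sum `S` is a polynomial in `p` whose value at `p = 0` is `1`: only the term
`M = N` survives, with coefficient `(N/N)² · C(N-1, N-1) = 1`. Hence the bracket tends to
`α / (α - 1)` by continuity. -/

open Filter Topology Real

/-- The sum `S(p)` of the AD-WPT variance formula, as a function of `p` (with `q = 1 - p`). -/
noncomputable def sectorSum (N : ℕ) (p : ℝ) : ℝ :=
  ∑ M ∈ Finset.Icc 1 N,
    ((N : ℝ) / (M : ℝ)) ^ 2 * (Nat.choose (N - 1) (M - 1) : ℝ) * p ^ (N - M) * (1 - p) ^ M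

theorem sectorSum_zero {N : ℕ} (hN : 1 ≤ N) : sectorSum N 0 = 1 := by
  have hN0 : (N : ℝ) ≠ 0 := by exact_mod_cast (by omega : N ≠ 0)
  rw [sectorSum, Finset.sum_eq_single_of_mem N (Finset.mem_Icc.mpr ⟨hN, le_rfl⟩)]
  · simp [div_self hN0]
  · intro M hM hMN
    have hMN' : N - M ≠ 0 := by have := (Finset.mem_Icc.mp hM).2; omega
    simp [zero_pow hMN']

theorem tendsto_sectorSum_nhds_zero {N : ℕ} (hN : 1 ≤ N) :
    Tendsto (sectorSum N) (𝓝 0) (𝓝 1) := by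
  rw [← sectorSum_zero hN]
  exact (show Continuous (sectorSum N) by unfold sectorSum; fun_prop).tendsto 0

theorem tendsto_exp_neg_mul_sq_div_atTop {c d : ℝ} (hc : 0 < c) (hd : 0 < d) :
    Tendsto (fun ρ : ℝ => exp (-(c * ρ ^ 2 / d))) atTop (𝓝 0) :=
  tendsto_exp_neg_atTop_nhds_zero.comp <|
    ((tendsto_pow_atTop two_ne_zero).const_mul_atTop hc).atTop_div_const hd

theorem tendsto_rpow_two_sub_two_mul_atTop {α : ℝ} (hα : 1 < α) :
    Tendsto (fun ρ : ℝ => ρ ^ (2 - 2 * α)) atTop (𝓝 0) := by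
  simpa [neg_sub] using tendsto_rpow_neg_atTop (show 0 < 2 * α - 2 by linarith)

theorem tendsto_varianceBracket {ι : Type*} {l : Filter ι} {r p S : ι → ℝ} {α : ℝ}
    (hα : α ≠ 1) (N : ℕ) (hr : Tendsto r l (𝓝 0)) (hp : Tendsto p l (𝓝 0))
    (hS : Tendsto S l (𝓝 1)) :
    Tendsto (fun i => r i * p i ^ N / (α - 1) +
        ((α - r i) / ((α - 1) * (1 - p i)) + r i / (α - 1)) * S i) l (𝓝 (α / (α - 1))) := by
  have hα1 : α - 1 ≠ 0 := sub_ne_zero.mpr hα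
  have hq : Tendsto (fun i => (α - 1) * (1 - p i)) l (𝓝 ((α - 1) * (1 - 0))) :=
    tendsto_const_nhds.mul (tendsto_const_nhds.sub hp)
  have h := ((hr.mul (hp.pow N)).div_const (α - 1)).add
    (((((tendsto_const_nhds (x := α)).sub hr).div hq (by simpa using hα1 : (α - 1) * (1 - 0) ≠ 0)).add
      (hr.div_const (α - 1))).mul hS)
  convert h using 2 <;> simp

theorem stmt_14_general (Pp lp σ ls α : ℝ) (N : ℕ)
    (hls : 0 < ls) (hα : 2 < α) (hN : 2 ≤ N) :
    Filter.Tendsto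
      (fun ρ : ℝ =>
        let p : ℝ := Real.exp (-(ls * Real.pi * ρ ^ 2 / N));
        let q : ℝ := 1 - p;
        let S : ℝ := ∑ M ∈ Finset.Icc 1 N,
          ((N : ℝ) / (M : ℝ)) ^ 2 * (Nat.choose (N - 1) (M - 1) : ℝ) * p ^ (N - M) * q ^ M;
        lp * Pp ^ 2 * σ ^ 2 * Real.pi *
          (ρ ^ (2 - 2 * α) * p ^ N / (α - 1) +
            ((α - ρ ^ (2 - 2 * α)) / ((α - 1) * q) + ρ ^ (2 - 2 * α) / (α - 1)) * S))
      Filter.atTop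
      (nhds (lp * Pp ^ 2 * σ ^ 2 * Real.pi * α / (α - 1))) := by
  have hp := tendsto_exp_neg_mul_sq_div_atTop (d := N) (by positivity : 0 < ls * π)
    (by exact_mod_cast (by omega : 0 < N) : (0 : ℝ) < N)
  have hbracket := tendsto_varianceBracket (by linarith : α ≠ 1) N
    (tendsto_rpow_two_sub_two_mul_atTop (by linarith)) hp
    ((tendsto_sectorSum_nhds_zero (N := N) (by omega)).comp hp)
  rw [mul_div_assoc]
  exact tendsto_const_nhds.mul hbracket

theorem stmt_14 (Pp lp σ ls α : ℝ) (N : ℕ)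
    (hPp : 0 < Pp) (hlp : 0 < lp) (hσ : 0 < σ) (hls : 0 < ls) (hα : 2 < α) (hN : 2 ≤ N) :
    Filter.Tendsto
      (fun ρ : ℝ =>
        let p : ℝ := Real.exp (-(ls * Real.pi * ρ ^ 2 / N));
        let q : ℝ := 1 - p;
        let S : ℝ := ∑ M ∈ Finset.Icc 1 N,
          ((N : ℝ) / (M : ℝ)) ^ 2 * (Nat.choose (N - 1) (M - 1) : ℝ) * p ^ (N - M) * q ^ M;
        lp * Pp ^ 2 * σ ^ 2 * Real.pi *
          (ρ ^ (2 - 2 * α) * p ^ N / (α - 1) +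
            ((α - ρ ^ (2 - 2 * α)) / ((α - 1) * q) + ρ ^ (2 - 2 * α) / (α - 1)) * S))
      Filter.atTop
      (nhds (lp * Pp ^ 2 * σ ^ 2 * Real.pi * α / (α - 1))) :=
  stmt_14_general Pp lp σ ls α N hls hα hN
end
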